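/- arXiv:0907.0693 — 2 statements merged into one kernel-verified Lean document; each statement's English description precedes it below -/
import Mathlib

section
/- Let t_0 < t_1 < ... < t_N be distinct real numbers, N ≥ 1, let D be the trailing N×N submatrix of the Lagrange differentiation matrix on t_0,...,t_N (deleting row and column 0), and let T = diag(t_1,...,t_N). Then the matrix (T - t_0 I_N) D has eigenvalues exactly 1, 2, ..., N (each simple), and its determinant equals N!. -/
/-!
The vectors `v⁽ᵐ⁾ = ((t j - t 0) ^ (m + 1))_{j ≥ 1}`, `m < N`, are the values at the nodes
`t 1, …, t N` of polynomials of degree `≤ N` vanishing at `t 0`. The Lagrange differentiation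
matrix differentiates such polynomials exactly, and dropping row and column `0` loses nothing
since they vanish at `t 0`; hence `(T - t 0 I) D v⁽ᵐ⁾ = (m + 1) v⁽ᵐ⁾`. The `v⁽ᵐ⁾` are the columns
of a scaled Vandermonde matrix, which is invertible, so `(T - t 0 I) D` is similar to
`diag(1, …, N)`.
-/

open Finset Matrix

/-- The Lagrange differentiation matrix on nodes `t`. -/
noncomputable def lagrangeD {ι : Type*} [Fintype ι] [DecidableEq ι] (t : ι → ℝ) :
    Matrix ι ι ℝ :=
  Matrix.of fun j k =>
    if j = k then ∑ l ∈ Finset.univ.erase j, (t j - t l)⁻¹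
    else (∏ l ∈ Finset.univ.erase j, (t j - t l)) /
      ((t j - t k) * ∏ l ∈ Finset.univ.erase k, (t k - t l))

open Polynomial

namespace Matrix

variable {n R : Type*} [Fintype n] [DecidableEq n] [CommRing R]

theorem charpoly_eq_of_mul_eq_mul_diagonal {A P : Matrix n n R} {d : n → R}
    (hP : IsUnit P.det) (h : A * P = P * diagonal d) :
    A.charpoly = ∏ i, (X - C (d i)) := by
  have hA : A = P * diagonal d * P⁻¹ := by rw [← h, mul_assoc, mul_nonsing_inv _ hP, mul_one]
  rw [hA, charpoly_mul_comm, ← mul_assoc, nonsing_inv_mul _ hP, one_mul, charpoly_diagonal]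

theorem det_eq_of_mul_eq_mul_diagonal {A P : Matrix n n R} {d : n → R}
    (hP : IsUnit P.det) (h : A * P = P * diagonal d) :
    A.det = ∏ i, d i := by
  have := congrArg det h
  rw [det_mul, det_mul, det_diagonal, mul_comm] at this
  exact hP.mul_left_cancel this

theorem det_of_pow_succ_ne_zero [IsDomain R] {n : ℕ} {c : Fin n → R}
    (hc : Function.Injective c) (hc0 : ∀ j, c j ≠ 0) :
    (of fun j (m : Fin n) => c j ^ ((m : ℕ) + 1)).det ≠ 0 := by
  have hfac : (of fun j (m : Fin n) => c j ^ ((m : ℕ) + 1)) = diagonal c * vandermonde c := by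
    ext j m
    rw [diagonal_mul, vandermonde_apply, of_apply, pow_succ']
  rw [hfac, det_mul, det_diagonal]
  exact mul_ne_zero (prod_ne_zero_iff.mpr fun j _ => hc0 j) (det_vandermonde_ne_zero_iff.mpr hc)

end Matrix

section Lagrange

variable {ι : Type*} [Fintype ι] [DecidableEq ι] {t : ι → ℝ}

theorem eval_derivative_basis_eq_lagrangeD (ht : Function.Injective t) (j k : ι) :
    (Lagrange.basis univ t k).derivative.eval (t j) = lagrangeD t j k := by
  have hsub {a b : ι} (hab : a ≠ b) : t a - t b ≠ 0 := sub_ne_zero.mpr (ht.ne hab)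
  have hderiv : (Lagrange.basis univ t k).derivative.eval (t j) =
      ∑ i ∈ univ.erase k,
        (∏ l ∈ (univ.erase k).erase i, (t k - t l)⁻¹ * (t j - t l)) * (t k - t i)⁻¹ := by
    simp only [Lagrange.basis, derivative_prod_finset, Lagrange.basisDivisor, derivative_C_mul,
      derivative_sub, derivative_X, derivative_C, sub_zero, mul_one, eval_finsetSum, eval_mul,
      eval_prod, eval_C, eval_sub, eval_X]
  rw [hderiv, lagrangeD, of_apply]
  split_ifs with hjk
  · subst hjk
    refine sum_congr rfl fun i _ => ?_
    rw [prod_eq_one fun l hl => inv_mul_cancel₀ (hsub (mem_erase.mp (mem_of_mem_erase hl)).1.symm),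
      one_mul]
  · have hj : j ∈ univ.erase k := mem_erase.mpr ⟨hjk, mem_univ j⟩
    -- only the `i = j` term survives: every other product contains the factor `t j - t j`
    rw [sum_eq_single_of_mem j hj fun i _ hij =>
      by rw [prod_eq_zero (mem_erase.mpr ⟨Ne.symm hij, hj⟩) (by rw [sub_self, mul_zero]), zero_mul]]
    have hA : ∏ l ∈ univ.erase j, (t j - t l) =
        (t j - t k) * ∏ l ∈ (univ.erase k).erase j, (t j - t l) := by
      rw [← mul_prod_erase _ _ (mem_erase.mpr ⟨Ne.symm hjk, mem_univ k⟩), erase_right_comm]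
    have hB : ∏ l ∈ univ.erase k, (t k - t l) =
        (t k - t j) * ∏ l ∈ (univ.erase k).erase j, (t k - t l) := (mul_prod_erase _ _ hj).symm
    rw [prod_mul_distrib, prod_inv_distrib, hA, hB]
    field_simp [hsub hjk, hsub (Ne.symm hjk)]

theorem lagrangeD_mulVec_eval (ht : Function.Injective t) {p : ℝ[X]}
    (hp : p.degree < Fintype.card ι) :
    lagrangeD t *ᵥ (fun k => p.eval (t k)) = fun j => p.derivative.eval (t j) := by
  ext j
  conv_rhs => rw [Lagrange.eq_interpolate (s := univ) ht.injOn hp]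
  simp only [mulVec, dotProduct, Lagrange.interpolate_apply, derivative_sum, derivative_C_mul,
    eval_finsetSum, eval_mul, eval_C, eval_derivative_basis_eq_lagrangeD ht]
  exact sum_congr rfl fun _ _ => mul_comm _ _

end Lagrange

theorem lagrangeD_submatrix_succ_mulVec_eval {n : ℕ} {t : Fin (n + 1) → ℝ}
    (ht : Function.Injective t) {p : ℝ[X]} (hp : p.degree ≤ n) (hp0 : p.eval (t 0) = 0) :
    (lagrangeD t).submatrix Fin.succ Fin.succ *ᵥ (fun k => p.eval (t k.succ)) =
      fun j => p.derivative.eval (t j.succ) := by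
  have hlt : p.degree < Fintype.card (Fin (n + 1)) := by
    rw [Fintype.card_fin]
    exact hp.trans_lt (by exact_mod_cast n.lt_succ_self)
  ext j
  have := congrFun (lagrangeD_mulVec_eval ht hlt) j.succ
  rwa [mulVec, dotProduct, Fin.sum_univ_succ, hp0, mul_zero, zero_add] at this

theorem diagonal_mul_lagrangeD_submatrix_mulVec_pow {n : ℕ} {t : Fin (n + 1) → ℝ}
    (ht : Function.Injective t) {m : ℕ} (hm : m < n) :
    (diagonal (fun j : Fin n => t j.succ - t 0) * (lagrangeD t).submatrix Fin.succ Fin.succ) *ᵥ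
        (fun j => (t j.succ - t 0) ^ (m + 1)) =
      ((m : ℝ) + 1) • fun j => (t j.succ - t 0) ^ (m + 1) := by
  have hp : ((X - C (t 0)) ^ (m + 1)).degree ≤ (n : WithBot ℕ) := by
    rw [degree_pow, degree_X_sub_C, nsmul_one]
    exact_mod_cast hm
  have := lagrangeD_submatrix_succ_mulVec_eval ht hp (by simp)
  simp only [eval_pow, eval_sub, eval_X, eval_C, derivative_X_sub_C_pow, eval_mul,
    add_tsub_cancel_right, Nat.cast_succ] at this
  rw [← mulVec_mulVec, this]
  ext j
  simp only [mulVec_diagonal, Pi.smul_apply, smul_eq_mul]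
  ring

theorem stmt_6_general (N : ℕ) (t : Fin (N + 1) → ℝ) (ht : StrictMono t) :
    ((Matrix.diagonal fun j : Fin N => t j.succ - t 0) *
          (lagrangeD t).submatrix Fin.succ Fin.succ).charpoly =
        ∏ m ∈ Finset.range N, (Polynomial.X - Polynomial.C ((m : ℝ) + 1)) ∧
      ((Matrix.diagonal fun j : Fin N => t j.succ - t 0) *
          (lagrangeD t).submatrix Fin.succ Fin.succ).det = (N.factorial : ℝ) := by
  have hc : Function.Injective fun j : Fin N => t j.succ - t 0 := fun i j h =>
    Fin.succ_injective _ (ht.injective (sub_left_injective h))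
  have hc0 (j : Fin N) : t j.succ - t 0 ≠ 0 := sub_ne_zero.mpr (ht.injective.ne j.succ_ne_zero)
  -- the columns of `P` are the eigenvectors `((t j - t 0) ^ (m + 1))_j`
  set P : Matrix (Fin N) (Fin N) ℝ := of fun j m => (t j.succ - t 0) ^ ((m : ℕ) + 1)
  have hP : IsUnit P.det := (det_of_pow_succ_ne_zero hc hc0).isUnit
  have hMP : (diagonal (fun j : Fin N => t j.succ - t 0) *
      (lagrangeD t).submatrix Fin.succ Fin.succ) * P =
      P * diagonal fun m : Fin N => ((m : ℕ) : ℝ) + 1 := by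
    ext j m
    rw [mul_diagonal]
    exact (congrFun (diagonal_mul_lagrangeD_submatrix_mulVec_pow ht.injective m.isLt) j).trans
      (by simp [P, mul_comm])
  constructor
  · rw [charpoly_eq_of_mul_eq_mul_diagonal hP hMP,
      Fin.prod_univ_eq_prod_range (fun m => X - C ((m : ℝ) + 1))]
  · rw [det_eq_of_mul_eq_mul_diagonal hP hMP, Fin.prod_univ_eq_prod_range (fun m => (m : ℝ) + 1)]
    exact_mod_cast prod_range_add_one_eq_factorial N

/-- `(T - t₀ I) D` has characteristic polynomial `∏_{m=1}^N (X - m)` (i.e. eigenvalues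
exactly `1, …, N`, each simple) and determinant `N!`. -/
theorem stmt_6 (N : ℕ) (hN : 1 ≤ N) (t : Fin (N + 1) → ℝ) (ht : StrictMono t) :
    ((Matrix.diagonal fun j : Fin N => t j.succ - t 0) *
          (lagrangeD t).submatrix Fin.succ Fin.succ).charpoly =
        ∏ m ∈ Finset.range N, (Polynomial.X - Polynomial.C ((m : ℝ) + 1)) ∧
      ((Matrix.diagonal fun j : Fin N => t j.succ - t 0) *
          (lagrangeD t).submatrix Fin.succ Fin.succ).det = (N.factorial : ℝ) :=
  stmt_6_general N t ht
end

section
/- Let t_0 < t_1 < ... < t_N be distinct real numbers, N ≥ 1, and let D be the N×N submatrix of the Lagrange differentiation matrix on t_0,...,t_N obtained by deleting the row and column indexed by t_0. Then D is invertible. -/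
/-!
Column `k` of the Lagrange differentiation matrix holds the values at the nodes of the derivative
of the `k`-th Lagrange basis polynomial, so `𝒟 w` lists the values at the nodes of `p'`, where `p`
interpolates `w` and has degree at most `N`. If `w` vanishes at `t₀` and `D` kills the rest of
`w`, then `p'` has degree `< N` and `N` roots `t₁, …, t_N`, so `p` is constant; as `p(t₀) = 0`,
`p = 0` and hence `w = 0`.
-/

open Finset Matrix

open Polynomial

namespace Lagrange

variable {F ι : Type*} [Field F] [DecidableEq ι] {s : Finset ι} {v : ι → F} {j k : ι}

theorem basis_eq_C_nodalWeight_mul_nodal_erase (s : Finset ι) (v : ι → F) (k : ι) :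
    Lagrange.basis s v k = C (nodalWeight s v k) * nodal (s.erase k) v := by
  simp_rw [Lagrange.basis, basisDivisor, nodalWeight, prod_mul_distrib, map_prod, nodal]

theorem derivative_basis (s : Finset ι) (v : ι → F) (k : ι) :
    derivative (Lagrange.basis s v k) =
      C (nodalWeight s v k) * ∑ i ∈ s.erase k, nodal ((s.erase k).erase i) v := by
  rw [basis_eq_C_nodalWeight_mul_nodal_erase, derivative_C_mul, derivative_nodal]

theorem eval_derivative_basis_self (hvs : Set.InjOn v s) (hk : k ∈ s) :
    (derivative (Lagrange.basis s v k)).eval (v k) = ∑ l ∈ s.erase k, (v k - v l)⁻¹ := by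
  rw [derivative_basis, eval_mul, eval_C, eval_finsetSum, mul_sum]
  refine sum_congr rfl fun l hl => ?_
  have hnodes : ∀ i ∈ (s.erase k).erase l, v k ≠ v i := fun i hi h =>
    (mem_erase.mp (mem_of_mem_erase hi)).1 (hvs (mem_of_mem_erase (mem_of_mem_erase hi)) hk h.symm)
  rw [nodalWeight_eq_eval_nodal_erase_inv, nodal_eq_mul_nodal_erase hl, eval_mul, eval_sub, eval_X,
    eval_C, mul_inv, inv_mul_cancel_right₀ (eval_nodal_not_at_node hnodes)]

theorem eval_derivative_basis_of_ne (hvs : Set.InjOn v s) (hj : j ∈ s) (hk : k ∈ s)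
    (hjk : j ≠ k) :
    (derivative (Lagrange.basis s v k)).eval (v j) =
      (∏ l ∈ s.erase j, (v j - v l)) / ((v j - v k) * ∏ l ∈ s.erase k, (v k - v l)) := by
  have hjk' : j ∈ s.erase k := mem_erase.mpr ⟨hjk, hj⟩
  rw [derivative_basis, eval_mul, eval_C, eval_finsetSum, sum_eq_single_of_mem j hjk']
  · have hne : v j - v k ≠ 0 := sub_ne_zero.mpr fun h => hjk (hvs hj hk h)
    rw [nodalWeight_eq_eval_nodal_erase_inv, eval_nodal, ← eval_nodal (x := v j),
      nodal_eq_mul_nodal_erase (mem_erase.mpr ⟨hjk.symm, hk⟩), eval_mul, eval_sub, eval_X, eval_C,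
      erase_right_comm, mul_div_mul_left _ _ hne, div_eq_inv_mul]
  · intro i hi hij
    exact eval_nodal_at_node (mem_erase.mpr ⟨hij.symm, hjk'⟩)

end Lagrange

theorem Polynomial.derivative_eq_zero_of_eval_derivative_eq_zero {F ι : Type*} [Field F]
    {s : Finset ι} {v : ι → F} {p : F[X]} (hvs : Set.InjOn v s) (hp : p.degree ≤ #s)
    (hp' : ∀ i ∈ s, (derivative p).eval (v i) = 0) : derivative p = 0 := by
  rcases eq_or_ne p 0 with rfl | hp0
  · exact derivative_zero
  · exact eq_zero_of_degree_lt_of_eval_index_eq_zero s hvs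
      ((degree_derivative_lt hp0).trans_le hp) hp'

section

variable {ι : Type*} [Fintype ι] [DecidableEq ι] {t : ι → ℝ}

theorem lagrangeD_apply_eq_eval_derivative_basis (ht : Function.Injective t) (j k : ι) :
    lagrangeD t j k = (derivative (Lagrange.basis univ t k)).eval (t j) := by
  rw [lagrangeD, of_apply]
  split_ifs with hjk
  · rw [hjk, Lagrange.eval_derivative_basis_self ht.injOn (mem_univ k)]
  · rw [Lagrange.eval_derivative_basis_of_ne ht.injOn (mem_univ j) (mem_univ k) hjk]

theorem lagrangeD_mulVec_eq_eval_derivative_interpolate (ht : Function.Injective t)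
    (w : ι → ℝ) (j : ι) :
    (lagrangeD t *ᵥ w) j = (derivative (Lagrange.interpolate univ t w)).eval (t j) := by
  simp only [mulVec, dotProduct, Lagrange.interpolate_apply, derivative_sum, derivative_mul,
    derivative_C, mul_zero, add_zero, eval_finsetSum, eval_mul, eval_C,
    lagrangeD_apply_eq_eval_derivative_basis ht, mul_comm]

theorem eq_zero_of_lagrangeD_mulVec_eq_zero_of_ne (ht : Function.Injective t) {i₀ : ι}
    {w : ι → ℝ} (hw : w i₀ = 0) (hDw : ∀ j ≠ i₀, (lagrangeD t *ᵥ w) j = 0) : w = 0 := by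
  set p := Lagrange.interpolate univ t w
  have hp_deg : p.degree ≤ #(univ.erase i₀) := by
    have := Lagrange.degree_interpolate_lt (s := univ) (r := w) ht.injOn
    rw [← card_erase_add_one (mem_univ i₀)] at this
    exact Order.le_of_lt_succ this
  have hp' : derivative p = 0 := derivative_eq_zero_of_eval_derivative_eq_zero
    ht.injOn hp_deg fun j hj => by
      rw [← lagrangeD_mulVec_eq_eval_derivative_interpolate ht]
      exact hDw j (ne_of_mem_erase hj)
  have hp : p = 0 := by
    have hp_node : p.eval (t i₀) = 0 := by
      rw [Lagrange.eval_interpolate_at_node w ht.injOn (mem_univ i₀), hw]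
    rw [eq_C_of_derivative_eq_zero hp', eval_C] at hp_node
    rw [eq_C_of_derivative_eq_zero hp', hp_node, C_0]
  funext i
  rw [Pi.zero_apply, ← Lagrange.eval_interpolate_at_node w ht.injOn (mem_univ i)]
  change p.eval (t i) = 0
  rw [hp, eval_zero]

end

theorem stmt_7_general (N : ℕ) (t : Fin (N + 1) → ℝ) (ht : StrictMono t) :
    IsUnit ((lagrangeD t).submatrix Fin.succ Fin.succ) := by
  rw [isUnit_iff_isUnit_det, isUnit_iff_ne_zero, Ne, ← exists_mulVec_eq_zero_iff]
  rintro ⟨v, hv, hDv⟩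
  have hDw : ∀ j ≠ 0, (lagrangeD t *ᵥ (Fin.cons 0 v : Fin (N + 1) → ℝ)) j = 0 := by
    intro j hj
    obtain ⟨j, rfl⟩ := Fin.exists_succ_eq.mpr hj
    simpa [mulVec, dotProduct, Fin.sum_univ_succ] using congrFun hDv j
  have hw := eq_zero_of_lagrangeD_mulVec_eq_zero_of_ne ht.injective rfl hDw
  exact hv (funext fun i => by simpa using congrFun hw i.succ)

/-- The trailing `N × N` block of the Lagrange differentiation matrix is invertible. -/
theorem stmt_7 (N : ℕ) (hN : 1 ≤ N) (t : Fin (N + 1) → ℝ) (ht : StrictMono t) :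
    IsUnit ((lagrangeD t).submatrix Fin.succ Fin.succ) :=
  stmt_7_general N t ht
end
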